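/- arXiv:1804.08512 — 2 statements merged into one kernel-verified Lean document; each statement's English description precedes it below -/
import Mathlib

section
/- Let G(z) = [1+z, −z], a 1×2 polynomial matrix function (m = 1, p = 2). Then T_G T_G* is strictly positive, and the associated function Y satisfies, for every z ∈ 𝔻, Y(z) = (1/(1+qz)) · [[1−(1−q)z, z], [−(1−q)z, 1+z]], where q = (3−√5)/2; moreover the associated matrix Ξ₀ equals (q/(1−2q)) · (1−q, q)ᵀ. -/
/-!
Setting: `l2 n` models ℓ²₊(ℂⁿ); `lp.single 2 0` is the canonical embedding `E_n`, and
evaluating a sequence at coordinate `k` realizes `E_n* (S_n*)^k`.  Block Toeplitz and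
Hankel operators, as well as the (bounded) inverse of `T_G T_G*`, are specified through
their actions on the standard basis vectors of the coordinate spaces.
-/

noncomputable section
open scoped Matrix

/-- ℂⁿ with the Euclidean norm. -/
abbrev ES (n : ℕ) : Type := EuclideanSpace ℂ (Fin n)

/-- ℓ²₊(ℂⁿ). -/
abbrev l2 (n : ℕ) : Type := lp (fun _ : ℕ => ES n) 2

/-- The `b`-th standard basis vector of ℂⁿ. -/
abbrev eVec (n : ℕ) (b : Fin n) : ES n := EuclideanSpace.single b 1

/-- The matrix function `z ↦ ∑' ν, z ^ ν • F ν` determined by a coefficient sequence. -/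
def seriesM {r s : ℕ} (F : ℕ → Matrix (Fin r) (Fin s) ℂ) (z : ℂ) :
    Matrix (Fin r) (Fin s) ℂ :=
  Matrix.of fun a b => ∑' ν : ℕ, z ^ ν * F ν a b

/-- The number `q = (3 − √5)/2`. -/
def qc : ℂ := (((3 - Real.sqrt 5) / 2 : ℝ) : ℂ)

/-!
The adjoint of `T_G` acts by `(T_G* x)_j = (x_j + x_{j+1}, -x_{j+1})`, so
`‖x‖² ≤ 2 ‖T_G* x‖²`; hence `⟪T_G T_G* x, x⟫ ≥ ‖x‖²/2` and `T_G T_G*` is invertible.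
The solution of `T_G T_G* w = E_1` is the geometric sequence `w_i = (-q)^i / (1 - q)`: the
three-term recursion it has to satisfy has characteristic equation `q² - 3q + 1 = 0`, whose root
of modulus `< 1` is `q = (3 - √5)/2`. Since `H_G E_2 = E_1 G_1`, both `Y` and `Ξ₀` are read off
from `T_G* w = ((-q)^j (1, q/(1 - q)))_j`, whose generating function is `(1 + qz)⁻¹ (1, q/(1 - q))`.
-/

open scoped InnerProductSpace ComplexConjugate NNReal

namespace ContinuousLinearMap

variable {𝕜 E F : Type*} [RCLike 𝕜] [NormedAddCommGroup E] [InnerProductSpace 𝕜 E]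
  [CompleteSpace E] [NormedAddCommGroup F] [InnerProductSpace 𝕜 F] [CompleteSpace F]

theorem exists_inverse_self_comp_adjoint {T : E →L[𝕜] F} {c : ℝ≥0} (hc : 0 < c)
    (h : ∀ y, ‖y‖ ^ 2 * c ≤ ‖T.adjoint y‖ ^ 2) :
    ∃ S : F →L[𝕜] F, (∀ y, S (T (T.adjoint y)) = y) ∧ ∀ y, T (T.adjoint (S y)) = y := by
  obtain ⟨u, hu⟩ := isUnit_of_forall_le_norm_inner_map (T ∘L T.adjoint) hc fun y => by
    rw [comp_apply, ← adjoint_inner_right, inner_self_eq_norm_sq_to_K, norm_pow,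
      RCLike.norm_ofReal, abs_norm]
    exact h y
  refine ⟨↑u⁻¹, fun y => ?_, fun y => ?_⟩
  · simpa [hu] using congr($(u.inv_mul) y)
  · simpa [hu] using congr($(u.mul_inv) y)

end ContinuousLinearMap

namespace l2

lemma apply_eq_inner {n : ℕ} (x : l2 n) (i : ℕ) (b : Fin n) :
    x i b = ⟪lp.single 2 i (eVec n b), x⟫_ℂ := by
  simp [lp.inner_single_left, EuclideanSpace.inner_single_left]

lemma adjoint_apply_apply {m p : ℕ} (A : l2 p →L[ℂ] l2 m) (x : l2 m) (j : ℕ) (b : Fin p) :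
    A.adjoint x j b = ⟪A (lp.single 2 j (eVec p b)), x⟫_ℂ := by
  rw [apply_eq_inner, ContinuousLinearMap.adjoint_inner_right]

lemma apply_apply {m p : ℕ} (A : l2 p →L[ℂ] l2 m) (y : l2 p) (i : ℕ) (a : Fin m) :
    A y i a = ∑' j, ∑ b, A (lp.single 2 j (eVec p b)) i a * y j b := by
  rw [apply_eq_inner, ← ContinuousLinearMap.adjoint_inner_left, lp.inner_eq_tsum]
  refine tsum_congr fun j => Finset.sum_congr rfl fun b _ => ?_
  rw [RCLike.inner_apply', adjoint_apply_apply, ← inner_conj_symm, starRingEnd_self_apply,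
    ← apply_eq_inner]

lemma hasSum_norm_sq {n : ℕ} (x : l2 n) : HasSum (fun i => ‖x i‖ ^ 2) (‖x‖ ^ 2) := by
  simpa only [ENNReal.toReal_ofNat, Real.rpow_two] using lp.hasSum_norm (p := 2) (by norm_num) x

lemma ext_fin_one {x y : l2 1} (h : ∀ i, x i 0 = y i 0) : x = y :=
  lp.ext <| funext fun i => PiLp.ext fun a => by rw [Subsingleton.elim a 0, h]

end l2

def IsBlockToeplitz {m p : ℕ} (G : ℕ → Matrix (Fin m) (Fin p) ℂ) (T : l2 p →L[ℂ] l2 m) :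
    Prop :=
  ∀ j b i a, T (lp.single 2 j (eVec p b)) i a = if j ≤ i then G (i - j) a b else 0

def IsBlockHankel {m p : ℕ} (G : ℕ → Matrix (Fin m) (Fin p) ℂ) (H : l2 p →L[ℂ] l2 m) :
    Prop :=
  ∀ j b i a, H (lp.single 2 j (eVec p b)) i a = G (i + j + 1) a b

namespace IsBlockToeplitz

variable {m p : ℕ} {G : ℕ → Matrix (Fin m) (Fin p) ℂ} {T : l2 p →L[ℂ] l2 m}

lemma apply_apply (hT : IsBlockToeplitz G T) (y : l2 p) (i : ℕ) (a : Fin m) :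
    T y i a = ∑ j ∈ Finset.range (i + 1), ∑ b, G (i - j) a b * y j b := by
  rw [l2.apply_apply, tsum_eq_sum (s := Finset.range (i + 1))]
  · refine Finset.sum_congr rfl fun j hj => Finset.sum_congr rfl fun b _ => ?_
    rw [hT, if_pos (Nat.lt_succ_iff.mp (Finset.mem_range.mp hj))]
  · intro j hj
    refine Finset.sum_eq_zero fun b _ => ?_
    rw [hT, if_neg (by simpa [Nat.lt_succ_iff] using hj), zero_mul]

lemma adjoint_apply_apply (hT : IsBlockToeplitz G T) {N : ℕ} (hG : ∀ ν, N ≤ ν → G ν = 0)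
    (x : l2 m) (j : ℕ) (b : Fin p) :
    T.adjoint x j b = ∑ k ∈ Finset.range N, ∑ a, conj (G k a b) * x (j + k) a := by
  have hinner : ∀ i, ⟪T (lp.single 2 j (eVec p b)) i, x i⟫_ℂ =
      ∑ a, conj (if j ≤ i then G (i - j) a b else 0) * x i a := fun i => by
    simp only [PiLp.inner_apply, RCLike.inner_apply', hT j b i]
  rw [l2.adjoint_apply_apply, lp.inner_eq_tsum, tsum_eq_sum (s := Finset.Ico j (j + N)),
    Finset.sum_Ico_eq_sum_range, Nat.add_sub_cancel_left]
  · refine Finset.sum_congr rfl fun k _ => ?_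
    simp only [hinner, Nat.le_add_right, if_true, Nat.add_sub_cancel_left]
  · intro i hi
    rw [hinner]
    refine Finset.sum_eq_zero fun a _ => ?_
    rw [Finset.mem_Ico, not_and_or, not_le, not_lt] at hi
    rcases hi with hi | hi
    · rw [if_neg (by omega), map_zero, zero_mul]
    · rw [if_pos (by omega), hG _ (by omega), Matrix.zero_apply, map_zero, zero_mul]

end IsBlockToeplitz

lemma qc_sq_sub_three_mul_add_one : qc ^ 2 - 3 * qc + 1 = 0 := by
  have h5 : Real.sqrt 5 ^ 2 = 5 := Real.sq_sqrt (by norm_num)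
  rw [qc]
  exact_mod_cast congrArg (fun r : ℝ => (r : ℂ)) (by linear_combination h5 / 4 :
    ((3 - Real.sqrt 5) / 2) ^ 2 - 3 * ((3 - Real.sqrt 5) / 2) + 1 = 0)

lemma norm_qc_lt_half : ‖qc‖ < 1 / 2 := by
  have h5 : Real.sqrt 5 ^ 2 = 5 := Real.sq_sqrt (by norm_num)
  have h2 : 2 < Real.sqrt 5 := by nlinarith [Real.sqrt_nonneg 5]
  have h3 : Real.sqrt 5 < 3 := by nlinarith [Real.sqrt_nonneg 5]
  rw [qc, Complex.norm_real, Real.norm_eq_abs, abs_of_pos (by linarith)]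
  linarith

lemma one_sub_qc_ne_zero : 1 - qc ≠ 0 := by
  intro h
  have := norm_qc_lt_half
  rw [← sub_eq_zero.mp h, norm_one] at this
  norm_num at this

lemma one_sub_two_mul_qc_ne_zero : 1 - 2 * qc ≠ 0 := by
  intro h
  have := norm_qc_lt_half
  rw [show qc = 1 / 2 by linear_combination -h / 2] at this
  norm_num at this

lemma one_add_qc_mul_ne_zero {z : ℂ} (hz : ‖z‖ < 1) : 1 + qc * z ≠ 0 := by
  intro h
  have : ‖qc * z‖ < 1 := by
    rw [norm_mul]
    nlinarith [norm_qc_lt_half, norm_nonneg z, norm_nonneg qc]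
  rw [show qc * z = -1 by linear_combination h, norm_neg, norm_one] at this
  exact lt_irrefl _ this

lemma tsum_pow_mul_neg_qc_pow {z : ℂ} (hz : ‖z‖ < 1) (c : ℂ) :
    ∑' i : ℕ, z ^ i * ((-qc) ^ i * c) = (1 + qc * z)⁻¹ * c := by
  have hr : ‖-qc * z‖ < 1 := by
    rw [norm_mul, norm_neg]
    nlinarith [norm_qc_lt_half, norm_nonneg z, norm_nonneg qc]
  simp_rw [← mul_assoc, ← mul_pow, mul_comm z]
  rw [tsum_mul_right, tsum_geometric_of_norm_lt_one hr, neg_mul, sub_neg_eq_add]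

lemma memℓp_geometric {r : ℂ} (hr : ‖r‖ < 1) (c : ℂ) :
    Memℓp (fun i : ℕ => (EuclideanSpace.single 0 (c * r ^ i) : ES 1)) 2 := by
  refine memℓp_gen ?_
  have hnorm : ∀ i : ℕ, ‖(EuclideanSpace.single 0 (c * r ^ i) : ES 1)‖ ^ (2 : ℝ) =
      ‖c‖ ^ 2 * (‖r‖ ^ 2) ^ i := fun i => by
    rw [Real.rpow_two, PiLp.norm_single, norm_mul, norm_pow, mul_pow, ← pow_mul, ← pow_mul,
      mul_comm i]
  simp only [ENNReal.toReal_ofNat, hnorm]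
  exact (summable_geometric_of_lt_one (by positivity)
    (by nlinarith [norm_nonneg r])).mul_left _

def geomL2 {r : ℂ} (hr : ‖r‖ < 1) (c : ℂ) : l2 1 := ⟨_, memℓp_geometric hr c⟩

@[simp]
lemma geomL2_apply {r : ℂ} (hr : ‖r‖ < 1) (c : ℂ) (i : ℕ) : geomL2 hr c i 0 = c * r ^ i := by
  simp [geomL2]

/-- Taylor coefficients of `G(z) = [1 + z, -z]`. -/
def bezoutSymbol : ℕ → Matrix (Fin 1) (Fin 2) ℂ
  | 0 => !![1, 0]
  | 1 => !![1, -1]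
  | _ + 2 => 0

lemma eq_bezoutSymbol {G : ℕ → Matrix (Fin 1) (Fin 2) ℂ} (hG0 : G 0 = !![1, 0])
    (hG1 : G 1 = !![1, -1]) (hGn : ∀ ν, 2 ≤ ν → G ν = 0) : G = bezoutSymbol :=
  funext fun
    | 0 => hG0
    | 1 => hG1
    | ν + 2 => hGn (ν + 2) (Nat.le_add_left 2 ν)

lemma bezoutSymbol_eq_zero {ν : ℕ} (h : 2 ≤ ν) : bezoutSymbol ν = 0 := by
  obtain ⟨k, rfl⟩ := Nat.exists_eq_add_of_le' h
  rfl

section BezoutToeplitz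

variable {T : l2 2 →L[ℂ] l2 1}

lemma bezoutToeplitz_adjoint_apply_zero (hT : IsBlockToeplitz bezoutSymbol T) (x : l2 1)
    (j : ℕ) : T.adjoint x j 0 = x j 0 + x (j + 1) 0 := by
  simp [hT.adjoint_apply_apply (N := 2) (fun _ => bezoutSymbol_eq_zero), Finset.sum_range_succ,
    bezoutSymbol]

lemma bezoutToeplitz_adjoint_apply_one (hT : IsBlockToeplitz bezoutSymbol T) (x : l2 1)
    (j : ℕ) : T.adjoint x j 1 = -x (j + 1) 0 := by
  simp [hT.adjoint_apply_apply (N := 2) (fun _ => bezoutSymbol_eq_zero), Finset.sum_range_succ,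
    bezoutSymbol]

lemma bezoutToeplitz_apply_zero (hT : IsBlockToeplitz bezoutSymbol T) (y : l2 2) :
    T y 0 0 = y 0 0 := by
  simp [hT.apply_apply, bezoutSymbol]

lemma bezoutToeplitz_apply_succ (hT : IsBlockToeplitz bezoutSymbol T) (y : l2 2) (i : ℕ) :
    T y (i + 1) 0 = y i 0 - y i 1 + y (i + 1) 0 := by
  have hfar : ∑ j ∈ Finset.range i, ∑ b, bezoutSymbol (i + 1 - j) 0 b * y j b = 0 :=
    Finset.sum_eq_zero fun j hj => by
      rw [bezoutSymbol_eq_zero (by simp at hj; omega)]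
      simp
  rw [hT.apply_apply, Finset.sum_range_succ, Finset.sum_range_succ, hfar]
  simp [show i + 1 - i = 1 by omega, bezoutSymbol]
  ring

lemma bezoutToeplitz_norm_sq_le (hT : IsBlockToeplitz bezoutSymbol T) (x : l2 1) :
    ‖x‖ ^ 2 * ((2⁻¹ : ℝ≥0) : ℝ) ≤ ‖T.adjoint x‖ ^ 2 := by
  refine hasSum_le (fun i => ?_) ((l2.hasSum_norm_sq x).mul_right _)
    (l2.hasSum_norm_sq (T.adjoint x))
  have htri := norm_add_le (x i 0 + x (i + 1) 0) (-x (i + 1) 0)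
  rw [add_neg_cancel_right, norm_neg] at htri
  simp only [EuclideanSpace.norm_sq_eq, Fin.sum_univ_one, Fin.sum_univ_two,
    bezoutToeplitz_adjoint_apply_zero hT, bezoutToeplitz_adjoint_apply_one hT, norm_neg,
    NNReal.coe_inv, NNReal.coe_ofNat]
  nlinarith [norm_nonneg (x i 0), sq_nonneg (‖x i 0 + x (i + 1) 0‖ - ‖x (i + 1) 0‖)]

end BezoutToeplitz

lemma norm_neg_qc_lt_one : ‖-qc‖ < 1 := by
  rw [norm_neg]
  linarith [norm_qc_lt_half]

def bezoutGramInvE : l2 1 := geomL2 norm_neg_qc_lt_one (1 - qc)⁻¹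

lemma bezoutToeplitz_adjoint_gramInvE {T : l2 2 →L[ℂ] l2 1}
    (hT : IsBlockToeplitz bezoutSymbol T) (j : ℕ) (a : Fin 2) :
    T.adjoint bezoutGramInvE j a = (-qc) ^ j * ![1, qc / (1 - qc)] a := by
  have := one_sub_qc_ne_zero
  fin_cases a
  · rw [Fin.zero_eta, bezoutToeplitz_adjoint_apply_zero hT]
    simp only [bezoutGramInvE, geomL2_apply, Matrix.cons_val_zero]
    field_simp
    ring
  · rw [Fin.mk_one, bezoutToeplitz_adjoint_apply_one hT]
    simp only [bezoutGramInvE, geomL2_apply, Matrix.cons_val_one, Matrix.cons_val_zero]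
    field_simp
    ring

lemma bezoutToeplitz_gram_gramInvE {T : l2 2 →L[ℂ] l2 1}
    (hT : IsBlockToeplitz bezoutSymbol T) :
    T (T.adjoint bezoutGramInvE) = lp.single 2 0 (eVec 1 0) := by
  have := one_sub_qc_ne_zero
  refine l2.ext_fin_one fun i => ?_
  cases i with
  | zero => simp [bezoutToeplitz_apply_zero hT, bezoutToeplitz_adjoint_gramInvE hT]
  | succ i =>
    simp only [bezoutToeplitz_apply_succ hT, bezoutToeplitz_adjoint_gramInvE hT,
      lp.single_apply_ne 2 0 _ (Nat.succ_ne_zero i)]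
    simp
    field_simp
    linear_combination (-qc) ^ i * qc_sq_sub_three_mul_add_one

lemma bezoutHankel_single_zero {H : l2 2 →L[ℂ] l2 1} (hH : IsBlockHankel bezoutSymbol H)
    (b : Fin 2) :
    H (lp.single 2 0 (eVec 2 b)) = bezoutSymbol 1 0 b • lp.single 2 0 (eVec 1 0) := by
  refine l2.ext_fin_one fun i => ?_
  rw [hH]
  cases i with
  | zero => simp
  | succ i => simp [bezoutSymbol_eq_zero (show 2 ≤ i + 1 + 0 + 1 by omega)]

lemma bezout_Y_apply {z : ℂ} (hz : 1 + qc * z ≠ 0) (a b : Fin 2) :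
    (if a = b then (1 : ℂ) else 0)
        - z * ((1 + qc * z)⁻¹ * (bezoutSymbol 1 0 b * ![1, qc / (1 - qc)] a))
      = ((1 + qc * z)⁻¹ • !![1 - (1 - qc) * z, z; -((1 - qc) * z), 1 + z]) a b := by
  have := one_sub_qc_ne_zero
  have := (mul_comm qc z) ▸ hz
  fin_cases a <;> fin_cases b <;> simp [bezoutSymbol] <;> field_simp
  · ring
  · linear_combination (-z) * qc_sq_sub_three_mul_add_one
  · linear_combination (-z) * qc_sq_sub_three_mul_add_one

lemma bezout_Xi_apply (a : Fin 2) :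
    ![1, qc / (1 - qc)] a = ((qc / (1 - 2 * qc)) • !![1 - qc; qc]) a 0 := by
  have := one_sub_qc_ne_zero
  have := (mul_comm 2 qc) ▸ one_sub_two_mul_qc_ne_zero
  fin_cases a <;> simp <;> field_simp
  · linear_combination qc_sq_sub_three_mul_add_one
  · linear_combination qc * qc_sq_sub_three_mul_add_one

/-- For `G(z) = [1 + z, −z]` (so `m = 1`, `p = 2`), `T_G T_G*` is
strictly positive (boundedly invertible), and the associated function `Y` equals
`(1/(1+qz)) [[1−(1−q)z, z], [−(1−q)z, 1+z]]` on 𝔻 with `q = (3−√5)/2`; moreover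
`Ξ₀ = (q/(1−2q)) (1−q, q)ᵀ`. -/
theorem bezout_corona_stmt9
    (G : ℕ → Matrix (Fin 1) (Fin 2) ℂ)
    (hG0 : G 0 = !![1, 0]) (hG1 : G 1 = !![1, -1]) (hGn : ∀ ν, 2 ≤ ν → G ν = 0)
    (TG : l2 2 →L[ℂ] l2 1)
    (hTG : ∀ (j : ℕ) (b : Fin 2) (i : ℕ) (a : Fin 1),
      (TG (lp.single 2 j (eVec 2 b))) i a = if j ≤ i then G (i - j) a b else 0)
    (HG : l2 2 →L[ℂ] l2 1)
    (hHG : ∀ (j : ℕ) (b : Fin 2) (i : ℕ) (a : Fin 1),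
      (HG (lp.single 2 j (eVec 2 b))) i a = G (i + j + 1) a b) :
    ∃ Tinv : l2 1 →L[ℂ] l2 1,
      (∀ x, Tinv (TG (TG.adjoint x)) = x) ∧
      (∀ x, TG (TG.adjoint (Tinv x)) = x) ∧
      (∀ z ∈ Metric.ball (0 : ℂ) 1, ∀ a b : Fin 2,
        (if a = b then (1 : ℂ) else 0)
            - z * ∑' i : ℕ, z ^ i *
                (TG.adjoint (Tinv (HG (lp.single 2 0 (eVec 2 b))))) i a
          = ((1 + qc * z)⁻¹ •
              !![1 - (1 - qc) * z, z; -((1 - qc) * z), 1 + z]) a b) ∧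
      (∀ (a : Fin 2) (b : Fin 1),
        (TG.adjoint (Tinv (lp.single 2 0 (eVec 1 b)))) 0 a
          = ((qc / (1 - 2 * qc)) • !![1 - qc; qc]) a b) := by
  obtain rfl := eq_bezoutSymbol hG0 hG1 hGn
  obtain ⟨Tinv, hleft, hright⟩ :=
    ContinuousLinearMap.exists_inverse_self_comp_adjoint (by norm_num)
      (bezoutToeplitz_norm_sq_le hTG)
  have hTinvE : ∀ b, Tinv (lp.single 2 0 (eVec 1 b)) = bezoutGramInvE := fun b => by
    rw [Subsingleton.elim b 0, ← bezoutToeplitz_gram_gramInvE hTG, hleft]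
  refine ⟨Tinv, hleft, hright, fun z hz a b => ?_, fun a b => ?_⟩
  · have hz1 : ‖z‖ < 1 := mem_ball_zero_iff.mp hz
    simp only [bezoutHankel_single_zero hHG, map_smul, hTinvE, lp.coeFn_smul, Pi.smul_apply,
      PiLp.smul_apply, smul_eq_mul, bezoutToeplitz_adjoint_gramInvE hTG,
      mul_left_comm (bezoutSymbol 1 0 b)]
    rw [tsum_pow_mul_neg_qc_pow hz1, bezout_Y_apply (one_add_qc_mul_ne_zero hz1)]
  · rw [hTinvE, bezoutToeplitz_adjoint_gramInvE hTG, pow_zero, one_mul, Subsingleton.elim b 0,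
      bezout_Xi_apply]
end
end

section
/- Let G ∈ H^∞_{m×p} with T_G T_G* strictly positive, and suppose G is a matrix polynomial of degree at most d, i.e. G_ν = 0 for all ν > d. Then the function z ↦ Y(z)⁻¹ is a matrix polynomial in z of degree at most d. -/
/-!
Setting: `l2 n` models ℓ²₊(ℂⁿ); `lp.single 2 0` is the canonical embedding `E_n`, and
evaluating a sequence at coordinate `k` realizes `E_n* (S_n*)^k`.  Block Toeplitz and
Hankel operators, as well as the (bounded) inverse of `T_G T_G*`, are specified through
their actions on the standard basis vectors of the coordinate spaces.
-/

noncomputable section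
open scoped Matrix

/-!
Put `A = T_G^* (T_G T_G^*)⁻¹ H_G`, so that `Y(z) = I - z Φ_z A E_p` with `Φ_z x = ∑ₖ zᵏ xₖ`.
The relations `S^* T_G = T_G S^* + H_G E_p E_p^*`, `T_G^* S^* = S^* T_G^*` and `H_G S = S^* H_G`
give the recursion `A S^{j+1} E_p = S^* A S^j E_p + A E_p E_p^* A S^j E_p`. Since
`Φ_z = E_p^* + z Φ_z S^*`, telescoping this recursion shows that
`I + ∑_{j<d} z^{j+1} E_p^* A S^j E_p` is a right inverse of `Y(z)`; the sum stops at `d`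
because `H_G S^d = 0` when `G_ν = 0` for `ν > d`.
-/

open Finset
open scoped InnerProductSpace ContinuousLinearMap

lemma mul_eq_one_of_shift_recursion {𝕜 U V : Type*} [NormedField 𝕜]
    [NormedAddCommGroup U] [NormedSpace 𝕜 U] [NormedAddCommGroup V] [NormedSpace 𝕜 V]
    {K : ℕ → U →L[𝕜] V} {D : V →L[𝕜] V} {π Φ : V →L[𝕜] U} {z : 𝕜} {d : ℕ}
    (hΦ : Φ = π + z • Φ ∘L D) (hK : ∀ j, K (j + 1) = D ∘L K j + K 0 ∘L π ∘L K j)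
    (hd : K d = 0) :
    (1 - z • Φ ∘L K 0) * (1 + ∑ j ∈ range d, z ^ (j + 1) • π ∘L K j) = 1 := by
  have hΦD : z • Φ ∘L D = Φ - π := eq_sub_of_add_eq' hΦ.symm
  have step (j : ℕ) : z • Φ ∘L K (j + 1)
      = Φ ∘L K j - π ∘L K j + z • ((Φ ∘L K 0) * (π ∘L K j)) := by
    calc z • Φ ∘L K (j + 1) = (z • Φ ∘L D) ∘L K j + z • ((Φ ∘L K 0) * (π ∘L K j)) := by
          rw [hK j, ContinuousLinearMap.comp_add, smul_add]
          rfl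
      _ = _ := by rw [hΦD, ContinuousLinearMap.sub_comp]
  set u := Φ ∘L K 0
  set B := ∑ j ∈ range d, z ^ j • π ∘L K j
  have hB : u = B - z • (u * B) := by
    have hsum := sum_range_sub (fun j => z ^ j • Φ ∘L K j) d
    have hterm (j : ℕ) : z ^ (j + 1) • Φ ∘L K (j + 1) - z ^ j • Φ ∘L K j
        = z • (u * (z ^ j • π ∘L K j)) - z ^ j • π ∘L K j := by
      rw [pow_succ', mul_smul, smul_comm z, step, mul_smul_comm]
      module
    simp only [hterm, hd, sum_sub_distrib, ← smul_sum, ← mul_sum,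
      ContinuousLinearMap.comp_zero, smul_zero, pow_zero, one_smul, zero_sub] at hsum
    rw [← neg_sub]
    exact (neg_eq_iff_eq_neg.mpr hsum).symm
  have hsum : ∑ j ∈ range d, z ^ (j + 1) • π ∘L K j = z • B := by
    simp only [B, smul_sum, smul_smul, pow_succ']
  calc (1 - z • u) * (1 + ∑ j ∈ range d, z ^ (j + 1) • π ∘L K j)
      = 1 + z • (B - z • (u * B) - u) := by
        rw [hsum]
        simp only [mul_add, sub_mul, one_mul, mul_one, smul_mul_assoc, mul_smul_comm]
        module
    _ = 1 := by rw [← hB, sub_self, smul_zero, add_zero]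

lemma comp_eq_of_inverse_of_intertwining {𝕜 E F : Type*} [NormedField 𝕜]
    [NormedAddCommGroup E] [NormedSpace 𝕜 E] [NormedAddCommGroup F] [NormedSpace 𝕜 F]
    {T : E →L[𝕜] F} {S : F →L[𝕜] E} {Q DF : F →L[𝕜] F} {DE : E →L[𝕜] E} {R : E →L[𝕜] F}
    (hQ : ∀ y, Q (T (S y)) = y) (hQ' : ∀ y, T (S (Q y)) = y)
    (hT : DF ∘L T = T ∘L DE + R) (hS : S ∘L DF = DE ∘L S) :
    Q ∘L DF = DF ∘L Q + Q ∘L R ∘L S ∘L Q := by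
  ext1 y
  have hT' := congr($hT (S (Q y)))
  have hS' := congr($hS (Q y))
  simp only [ContinuousLinearMap.comp_apply, add_apply] at hT' hS' ⊢
  conv_lhs => rw [← hQ' y, hT', ← hS', map_add, hQ]

namespace Matrix

lemma toEuclideanCLM_symm_apply {𝕜 ι : Type*} [RCLike 𝕜] [Fintype ι] [DecidableEq ι]
    (f : EuclideanSpace 𝕜 ι →L[𝕜] EuclideanSpace 𝕜 ι) (i j : ι) :
    (toEuclideanCLM (n := ι) (𝕜 := 𝕜)).symm f i j = f (EuclideanSpace.single j 1) i := by
  set A := (toEuclideanCLM (n := ι) (𝕜 := 𝕜)).symm f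
  have hf : f = toEuclideanCLM (n := ι) (𝕜 := 𝕜) A := (StarAlgEquiv.apply_symm_apply _ f).symm
  rw [hf, ofLp_toEuclideanCLM]
  simp

end Matrix

section Shift

variable {𝕜 E : Type*} [NontriviallyNormedField 𝕜] [NormedAddCommGroup E] [NormedSpace 𝕜 E]

lemma memℓp_two_comp_succ (x : lp (fun _ : ℕ => E) 2) : Memℓp (fun k => x (k + 1)) 2 :=
  memℓp_gen ((summable_nat_add_iff 1).mpr (lp.hasSum_norm (by norm_num) x).summable)

variable (𝕜 E) in
def backwardShift : lp (fun _ : ℕ => E) 2 →L[𝕜] lp (fun _ : ℕ => E) 2 :=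
  LinearMap.mkContinuous
    { toFun := fun x => ⟨fun k => x (k + 1), memℓp_two_comp_succ x⟩
      map_add' := fun _ _ => rfl
      map_smul' := fun _ _ => rfl }
    1 fun x => by
      rw [one_mul]
      refine lp.norm_le_of_forall_sum_le (by norm_num) (norm_nonneg x) fun s => ?_
      convert lp.sum_rpow_le_norm_rpow (by norm_num) x (s.map (addRightEmbedding 1)) using 1
      simp only [Finset.sum_map]
      rfl

@[simp] lemma lp.evalCLM_apply (k : ℕ) (x : lp (fun _ : ℕ => E) 2) :
    lp.evalCLM 𝕜 (fun _ : ℕ => E) 2 k x = x k := rfl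

@[simp] lemma backwardShift_apply (x : lp (fun _ : ℕ => E) 2) (k : ℕ) :
    backwardShift 𝕜 E x k = x (k + 1) := rfl

lemma backwardShift_single_succ (j : ℕ) (w : E) :
    backwardShift 𝕜 E (lp.single 2 (j + 1) w) = lp.single 2 j w := by
  ext k : 2
  simp [lp.single_apply, Pi.single_apply]

lemma backwardShift_single_zero (w : E) : backwardShift 𝕜 E (lp.single 2 0 w) = 0 := by
  ext k : 2
  simp [lp.single_apply]

end Shift

lemma inner_backwardShift_right {𝕜 E : Type*} [RCLike 𝕜] [NormedAddCommGroup E]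
    [InnerProductSpace 𝕜 E] {x x' : lp (fun _ : ℕ => E) 2} (h0 : x' 0 = 0)
    (hsucc : ∀ i, x' (i + 1) = x i) (y : lp (fun _ : ℕ => E) 2) :
    ⟪x, backwardShift 𝕜 E y⟫_𝕜 = ⟪x', y⟫_𝕜 := by
  rw [lp.inner_eq_tsum, lp.inner_eq_tsum, (lp.summable_inner (𝕜 := 𝕜) x' y).tsum_eq_zero_add,
    h0, inner_zero_left, zero_add]
  exact tsum_congr fun i => by rw [hsucc]; rfl

section GeneratingFunction

variable {𝕜 E : Type*} [NontriviallyNormedField 𝕜] [NormedAddCommGroup E] [NormedSpace 𝕜 E]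
  [CompleteSpace E] {z : 𝕜}

variable (E) in
lemma summable_pow_smul_evalCLM (hz : ‖z‖ < 1) :
    Summable fun k => z ^ k • lp.evalCLM 𝕜 (fun _ : ℕ => E) 2 k := by
  refine .of_norm_bounded (summable_geometric_of_lt_one (norm_nonneg z) hz) fun k => ?_
  calc ‖z ^ k • lp.evalCLM 𝕜 (fun _ : ℕ => E) 2 k‖
      ≤ ‖z‖ ^ k * 1 := by
        rw [norm_smul, norm_pow]
        gcongr
        exact LinearMap.mkContinuous_norm_le _ zero_le_one _
    _ = ‖z‖ ^ k := mul_one _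

variable (𝕜 E) in
def generatingFunction (z : 𝕜) : lp (fun _ : ℕ => E) 2 →L[𝕜] E :=
  ∑' k, z ^ k • lp.evalCLM 𝕜 (fun _ : ℕ => E) 2 k

lemma generatingFunction_hasSum (hz : ‖z‖ < 1) (x : lp (fun _ : ℕ => E) 2) :
    HasSum (fun k => z ^ k • x k) (generatingFunction 𝕜 E z x) :=
  (summable_pow_smul_evalCLM E hz).hasSum.mapL (ContinuousLinearMap.apply 𝕜 E x)

lemma generatingFunction_eq (hz : ‖z‖ < 1) :
    generatingFunction 𝕜 E z
      = lp.evalCLM 𝕜 (fun _ : ℕ => E) 2 0 + z • generatingFunction 𝕜 E z ∘L backwardShift 𝕜 E := by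
  ext x
  have htail : HasSum (fun k => z ^ (k + 1) • x (k + 1))
      (z • generatingFunction 𝕜 E z (backwardShift 𝕜 E x)) := by
    simpa [pow_succ', mul_smul] using
      (generatingFunction_hasSum hz (backwardShift 𝕜 E x)).const_smul z
  rw [(generatingFunction_hasSum hz x).unique htail.zero_add]
  simp

lemma generatingFunction_apply_apply {n : ℕ} {z : ℂ} (hz : ‖z‖ < 1) (x : l2 n) (a : Fin n) :
    generatingFunction ℂ (ES n) z x a = ∑' k, z ^ k * x k a :=
  (((generatingFunction_hasSum hz x).mapL (EuclideanSpace.proj a)).tsum_eq).symm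

end GeneratingFunction

section BlockToeplitz

lemma l2_ext {n : ℕ} {x y : l2 n} (h : ∀ i a, x i a = y i a) : x = y :=
  lp.ext (funext fun i => PiLp.ext (h i))

lemma euclideanSpace_clm_ext {n : ℕ} {X : Type*} [NormedAddCommGroup X] [NormedSpace ℂ X]
    {f g : ES n →L[ℂ] X} (h : ∀ b, f (eVec n b) = g (eVec n b)) : f = g :=
  ContinuousLinearMap.coe_injective <|
    (EuclideanSpace.basisFun (Fin n) ℂ).toBasis.ext fun b => by simpa using h b

lemma l2_clm_ext {n : ℕ} {X : Type*} [NormedAddCommGroup X] [NormedSpace ℂ X]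
    {f g : l2 n →L[ℂ] X}
    (h : ∀ j b, f (lp.single 2 j (eVec n b)) = g (lp.single 2 j (eVec n b))) : f = g :=
  lp.ext_continuousLinearMap ENNReal.ofNat_ne_top fun j => euclideanSpace_clm_ext (h j)

lemma l2_apply_eq_inner {n : ℕ} (x : l2 n) (k : ℕ) (b : Fin n) :
    x k b = ⟪lp.single 2 k (eVec n b), x⟫_ℂ := by
  simp [lp.inner_single_left, EuclideanSpace.inner_single_left]

variable {m p : ℕ} {G : ℕ → Matrix (Fin m) (Fin p) ℂ} {TG HG : l2 p →L[ℂ] l2 m}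

lemma backwardShift_comp_toeplitz
    (hTG : ∀ (j : ℕ) (b : Fin p) (i : ℕ) (a : Fin m),
      (TG (lp.single 2 j (eVec p b))) i a = if j ≤ i then G (i - j) a b else 0)
    (hHG : ∀ (j : ℕ) (b : Fin p) (i : ℕ) (a : Fin m),
      (HG (lp.single 2 j (eVec p b))) i a = G (i + j + 1) a b) :
    (backwardShift ℂ (ES m)).comp TG = TG.comp (backwardShift ℂ (ES p))
      + HG.comp ((lp.singleContinuousLinearMap ℂ _ 2 0).comp (lp.evalCLM ℂ _ 2 0)) := by
  refine l2_clm_ext fun j b => l2_ext fun i a => ?_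
  cases j with
  | zero => simp [backwardShift_single_zero, hTG, hHG]
  | succ j => simp [backwardShift_single_succ, hTG, lp.single_apply]

lemma toeplitz_adjoint_comp_backwardShift
    (hTG : ∀ (j : ℕ) (b : Fin p) (i : ℕ) (a : Fin m),
      (TG (lp.single 2 j (eVec p b))) i a = if j ≤ i then G (i - j) a b else 0) :
    TG.adjoint.comp (backwardShift ℂ (ES m)) = (backwardShift ℂ (ES p)).comp TG.adjoint := by
  ext y : 1
  refine l2_ext fun k b => ?_
  have hshift : ⟪TG (lp.single 2 k (eVec p b)), backwardShift ℂ (ES m) y⟫_ℂ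
      = ⟪TG (lp.single 2 (k + 1) (eVec p b)), y⟫_ℂ :=
    inner_backwardShift_right (PiLp.ext fun a => by simp [hTG])
      (fun i => PiLp.ext fun a => by simp [hTG]) y
  simp only [ContinuousLinearMap.comp_apply, backwardShift_apply, l2_apply_eq_inner,
    ContinuousLinearMap.adjoint_inner_right, hshift]

lemma hankel_comp_single_succ
    (hHG : ∀ (j : ℕ) (b : Fin p) (i : ℕ) (a : Fin m),
      (HG (lp.single 2 j (eVec p b))) i a = G (i + j + 1) a b) (j : ℕ) :
    HG.comp (lp.singleContinuousLinearMap ℂ _ 2 (j + 1))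
      = (backwardShift ℂ (ES m)).comp (HG.comp (lp.singleContinuousLinearMap ℂ _ 2 j)) :=
  euclideanSpace_clm_ext fun b => l2_ext fun i a => by
    simp only [ContinuousLinearMap.comp_apply, lp.singleContinuousLinearMap_apply,
      backwardShift_apply, hHG]
    rw [show i + 1 + j + 1 = i + (j + 1) + 1 by omega]

lemma hankel_comp_single_eq_zero
    (hHG : ∀ (j : ℕ) (b : Fin p) (i : ℕ) (a : Fin m),
      (HG (lp.single 2 j (eVec p b))) i a = G (i + j + 1) a b)
    {d : ℕ} (hGd : ∀ ν, d < ν → G ν = 0) {j : ℕ} (hj : d ≤ j) :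
    HG.comp (lp.singleContinuousLinearMap ℂ _ 2 j) = 0 :=
  euclideanSpace_clm_ext fun b => l2_ext fun i a => by simp [hHG, hGd (i + j + 1) (by omega)]

variable {Tinv : l2 m →L[ℂ] l2 m}

variable (TG HG Tinv) in
def pinvHankelColumn (j : ℕ) : ES p →L[ℂ] l2 p :=
  TG.adjoint ∘L Tinv ∘L HG ∘L lp.singleContinuousLinearMap ℂ (fun _ : ℕ => ES p) 2 j

lemma pinvHankelColumn_succ
    (hTG : ∀ (j : ℕ) (b : Fin p) (i : ℕ) (a : Fin m),
      (TG (lp.single 2 j (eVec p b))) i a = if j ≤ i then G (i - j) a b else 0)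
    (hHG : ∀ (j : ℕ) (b : Fin p) (i : ℕ) (a : Fin m),
      (HG (lp.single 2 j (eVec p b))) i a = G (i + j + 1) a b)
    (hT1 : ∀ x, Tinv (TG (TG.adjoint x)) = x) (hT2 : ∀ x, TG (TG.adjoint (Tinv x)) = x)
    (j : ℕ) :
    pinvHankelColumn TG HG Tinv (j + 1)
      = backwardShift ℂ (ES p) ∘L pinvHankelColumn TG HG Tinv j
        + pinvHankelColumn TG HG Tinv 0 ∘L lp.evalCLM ℂ _ 2 0 ∘L pinvHankelColumn TG HG Tinv j := by
  have hTinv := comp_eq_of_inverse_of_intertwining hT1 hT2 (backwardShift_comp_toeplitz hTG hHG)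
    (toeplitz_adjoint_comp_backwardShift hTG)
  ext1 w
  have hH := congr($(hankel_comp_single_succ hHG j) w)
  have hQ := congr($hTinv (HG (lp.single 2 j w)))
  have hA := congr($(toeplitz_adjoint_comp_backwardShift hTG) (Tinv (HG (lp.single 2 j w))))
  simp only [pinvHankelColumn, ContinuousLinearMap.comp_apply, add_apply,
    lp.singleContinuousLinearMap_apply] at hH hQ hA ⊢
  rw [hH, hQ, map_add, hA]

lemma pinvHankelColumn_eq_zero
    (hHG : ∀ (j : ℕ) (b : Fin p) (i : ℕ) (a : Fin m),
      (HG (lp.single 2 j (eVec p b))) i a = G (i + j + 1) a b)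
    {d : ℕ} (hGd : ∀ ν, d < ν → G ν = 0) {j : ℕ} (hj : d ≤ j) :
    pinvHankelColumn TG HG Tinv j = 0 := by
  rw [pinvHankelColumn, hankel_comp_single_eq_zero hHG hGd hj, ContinuousLinearMap.comp_zero,
    ContinuousLinearMap.comp_zero]

end BlockToeplitz

theorem bezout_corona_stmt19_general
    (m p : ℕ)
    (G : ℕ → Matrix (Fin m) (Fin p) ℂ)
    (TG : l2 p →L[ℂ] l2 m)
    (hTG : ∀ (j : ℕ) (b : Fin p) (i : ℕ) (a : Fin m),
      (TG (lp.single 2 j (eVec p b))) i a = if j ≤ i then G (i - j) a b else 0)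
    (HG : l2 p →L[ℂ] l2 m)
    (hHG : ∀ (j : ℕ) (b : Fin p) (i : ℕ) (a : Fin m),
      (HG (lp.single 2 j (eVec p b))) i a = G (i + j + 1) a b)
    (Tinv : l2 m →L[ℂ] l2 m)
    (hT1 : ∀ x, Tinv (TG (TG.adjoint x)) = x)
    (hT2 : ∀ x, TG (TG.adjoint (Tinv x)) = x)
    (Y : ℂ → Matrix (Fin p) (Fin p) ℂ)
    (hY : ∀ z ∈ Metric.ball (0 : ℂ) 1, ∀ (a b : Fin p),
      Y z a b = (if a = b then 1 else 0)
        - z * ∑' i : ℕ, z ^ i *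
            (TG.adjoint (Tinv (HG (lp.single 2 0 (eVec p b))))) i a)
    (d : ℕ)
    (hGd : ∀ ν, d < ν → G ν = 0) :
    ∃ W : ℕ → Matrix (Fin p) (Fin p) ℂ,
      (∀ ν, d < ν → W ν = 0) ∧
      ∀ z ∈ Metric.ball (0 : ℂ) 1,
        (Y z)⁻¹ = ∑ ν ∈ Finset.range (d + 1), z ^ ν • W ν := by
  set K := pinvHankelColumn TG HG Tinv
  have hKd (j : ℕ) (hj : d ≤ j) : K j = 0 := pinvHankelColumn_eq_zero hHG hGd hj
  set π := lp.evalCLM ℂ (fun _ : ℕ => ES p) 2 0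
  set toMatrix := (Matrix.toEuclideanCLM (n := Fin p) (𝕜 := ℂ)).symm
  refine ⟨fun ν => toMatrix (if ν = 0 then 1 else π ∘L K (ν - 1)), fun ν hν => ?_, fun z hz => ?_⟩
  · dsimp only
    rw [if_neg (by omega), hKd (ν - 1) (by omega), ContinuousLinearMap.comp_zero, map_zero]
  have hz1 : ‖z‖ < 1 := mem_ball_zero_iff.mp hz
  have hYz : Y z = toMatrix (1 - z • generatingFunction ℂ (ES p) z ∘L K 0) := by
    ext a b
    rw [hY z hz, Matrix.toEuclideanCLM_symm_apply]
    simp [K, pinvHankelColumn, generatingFunction_apply_apply hz1]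
  have hW : ∑ ν ∈ range (d + 1), z ^ ν • toMatrix (if ν = 0 then 1 else π ∘L K (ν - 1))
      = toMatrix (1 + ∑ j ∈ range d, z ^ (j + 1) • π ∘L K j) := by
    simp [sum_range_succ', map_sum, map_smul, add_comm]
  rw [hW]
  refine Matrix.inv_eq_right_inv ?_
  rw [hYz, ← map_mul,
    mul_eq_one_of_shift_recursion (generatingFunction_eq hz1)
      (pinvHankelColumn_succ hTG hHG hT1 hT2) (hKd d le_rfl), map_one]

/-- If `G ∈ H^∞_{m×p}` with `T_G T_G*` strictly positive is a matrix
polynomial of degree at most `d` (`G_ν = 0` for `ν > d`), then `z ↦ Y(z)⁻¹` is a matrix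
polynomial of degree at most `d`. -/
theorem bezout_corona_stmt19
    (m p : ℕ) (hm : 0 < m) (hmp : m ≤ p)
    (G : ℕ → Matrix (Fin m) (Fin p) ℂ)
    (TG : l2 p →L[ℂ] l2 m)
    (hTG : ∀ (j : ℕ) (b : Fin p) (i : ℕ) (a : Fin m),
      (TG (lp.single 2 j (eVec p b))) i a = if j ≤ i then G (i - j) a b else 0)
    (HG : l2 p →L[ℂ] l2 m)
    (hHG : ∀ (j : ℕ) (b : Fin p) (i : ℕ) (a : Fin m),
      (HG (lp.single 2 j (eVec p b))) i a = G (i + j + 1) a b)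
    (Tinv : l2 m →L[ℂ] l2 m)
    (hT1 : ∀ x, Tinv (TG (TG.adjoint x)) = x)
    (hT2 : ∀ x, TG (TG.adjoint (Tinv x)) = x)
    (Y : ℂ → Matrix (Fin p) (Fin p) ℂ)
    (hY : ∀ z ∈ Metric.ball (0 : ℂ) 1, ∀ (a b : Fin p),
      Y z a b = (if a = b then 1 else 0)
        - z * ∑' i : ℕ, z ^ i *
            (TG.adjoint (Tinv (HG (lp.single 2 0 (eVec p b))))) i a)
    (d : ℕ)
    (hGd : ∀ ν, d < ν → G ν = 0) :
    ∃ W : ℕ → Matrix (Fin p) (Fin p) ℂ,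
      (∀ ν, d < ν → W ν = 0) ∧
      ∀ z ∈ Metric.ball (0 : ℂ) 1,
        (Y z)⁻¹ = ∑ ν ∈ Finset.range (d + 1), z ^ ν • W ν :=
  bezout_corona_stmt19_general m p G TG hTG HG hHG Tinv hT1 hT2 Y hY d hGd
end
end
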